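/- arXiv:1404.5802 — 3 statements merged into one kernel-verified Lean document; each statement's English description precedes it below -/
import Mathlib

section
/- (Andreief/Heine identity) Let μ be a measure on ℝ and let φ_1,...,φ_n and ψ_1,...,ψ_n be μ-integrable functions such that all products φ_j ψ_k are μ-integrable. Then ∫⋯∫ det[φ_j(x_k)]_{j,k=1}^n · det[ψ_k(x_j)]_{j,k=1}^n dμ(x_1)⋯dμ(x_n) = n! · det[∫ φ_j(x) ψ_k(x) dμ(x)]_{j,k=1}^n. -/
/-!
Expanding both determinants by the Leibniz formula writes the integrand as a signed sum over pairs
of permutations `(σ, τ)` of products `∏ i, φ (σ i) (x i) * ψ (τ i) (x i)`, each of which factorises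
under the product measure. Reindexing by `τ * σ⁻¹`, every `σ` contributes the same determinant
`det [∫ φ j ψ k dμ]`, hence the factor `n!`.
-/

open MeasureTheory Filter Set Equiv

theorem Set.prod_indicator_eval_eq_indicator_pi {ι : Type*} [Fintype ι] {α : ι → Type*}
    {R : Type*} [CommMonoidWithZero R] (T : ∀ i, Set (α i)) (f : ∀ i, α i → R) (x : ∀ i, α i) :
    ∏ i, (T i).indicator (f i) (x i) = (univ.pi T).indicator (fun x => ∏ i, f i (x i)) x := by
  by_cases hx : x ∈ univ.pi T
  · rw [indicator_of_mem hx]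
    exact Finset.prod_congr rfl fun i _ => indicator_of_mem (hx i (mem_univ i)) _
  · obtain ⟨i, hi⟩ : ∃ i, x i ∉ T i := by simpa [mem_univ_pi] using hx
    rw [indicator_of_notMem hx]
    exact Finset.prod_eq_zero (Finset.mem_univ i) (indicator_of_notMem hi _)

namespace MeasureTheory

variable {ι : Type*} [Fintype ι] {α : ι → Type*} [∀ i, MeasurableSpace (α i)]
  {μ : ∀ i, Measure (α i)}

namespace Measure

-- Primed lemmas drop the σ-finiteness assumptions of their Mathlib counterparts; for integrals,
-- integrability confines each factor to a set on which its measure is σ-finite.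

theorem pi_eval_preimage_null' {i : ι} {s : Set (α i)} (hs : μ i s = 0) :
    Measure.pi μ (Function.eval i ⁻¹' s) = 0 := by
  classical
  obtain ⟨t, hst, htm, ht⟩ := exists_measurable_superset_of_null hs
  refine measure_mono_null (preimage_mono hst) (le_antisymm ?_ zero_le)
  rw [Measure.pi_def, toMeasure_apply _ _ (measurable_pi_apply i htm), ← univ_pi_update_univ]
  refine (OuterMeasure.pi_pi_le _ _).trans_eq (Finset.prod_eq_zero (Finset.mem_univ i) ?_)
  simp [ht]

theorem tendsto_eval_ae_ae' {i : ι} : Tendsto (Function.eval i) (ae (Measure.pi μ)) (ae (μ i)) :=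
  fun _ hs => pi_eval_preimage_null' hs

theorem pi_mono {ν : ∀ i, Measure (α i)} (h : ∀ i, ν i ≤ μ i) : Measure.pi ν ≤ Measure.pi μ := by
  refine Measure.le_iff.2 fun s hs => ?_
  rw [Measure.pi_def, Measure.pi_def, toMeasure_apply _ _ hs, toMeasure_apply _ _ hs]
  refine OuterMeasure.le_pi.2 (fun t _ => (OuterMeasure.pi_pi_le _ t).trans ?_) s
  exact Finset.prod_le_prod' fun i _ => Measure.le_iff'.1 (h i) (t i)

theorem restrict_pi_pi' {T : ∀ i, Set (α i)} (hT : ∀ i, MeasurableSet (T i))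
    [∀ i, SigmaFinite ((μ i).restrict (T i))] :
    (Measure.pi μ).restrict (univ.pi T) = Measure.pi fun i => (μ i).restrict (T i) := by
  refine (pi_eq fun s hs => ?_).symm
  have hsT i : MeasurableSet (s i ∩ T i) := (hs i).inter (hT i)
  simp_rw [restrict_apply (MeasurableSet.univ_pi hs), ← pi_inter_distrib, restrict_apply (hs _)]
  refine le_antisymm ?_ ?_
  · rw [Measure.pi_def, toMeasure_apply _ _ (MeasurableSet.univ_pi hsT)]
    exact OuterMeasure.pi_pi_le _ _
  · calc ∏ i, μ i (s i ∩ T i) = ∏ i, (μ i).restrict (T i) (s i ∩ T i) := by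
          simp_rw [restrict_apply (hsT _), inter_assoc, inter_self]
      _ = Measure.pi (fun i => (μ i).restrict (T i)) (univ.pi fun i => s i ∩ T i) :=
          (pi_pi _ _).symm
      _ ≤ _ := pi_mono (fun i => restrict_le_self) _

end Measure

theorem prod_ae_eq_indicator_univ_pi {R : Type*} [CommMonoidWithZero R] {f : ∀ i, α i → R}
    {T : ∀ i, Set (α i)} (hT : ∀ i, MeasurableSet (T i))
    (hfT : ∀ i, f i =ᵐ[(μ i).restrict (T i)ᶜ] 0) :
    (fun x => ∏ i, f i (x i)) =ᵐ[Measure.pi μ] (univ.pi T).indicator fun x => ∏ i, f i (x i) := by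
  have h i : (T i).indicator (f i) =ᵐ[μ i] f i :=
    indicator_ae_eq_of_restrict_compl_ae_eq_zero (hT i) (hfT i)
  filter_upwards [eventually_all.2 fun i => Measure.tendsto_eval_ae_ae'.eventually (h i)]
    with x hx
  rw [← Set.prod_indicator_eval_eq_indicator_pi]
  exact Finset.prod_congr rfl fun i _ => (hx i).symm

theorem Integrable.fintype_prod_dep' {𝕜 : Type*} [NormedCommRing 𝕜] {f : ∀ i, α i → 𝕜}
    (hf : ∀ i, Integrable (f i) (μ i)) :
    Integrable (fun x => ∏ i, f i (x i)) (Measure.pi μ) := by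
  have hfin i := (hf i).aefinStronglyMeasurable
  have := fun i => (hfin i).sigmaFinite_restrict
  have hT i := (hfin i).measurableSet
  refine Integrable.congr ?_
    (prod_ae_eq_indicator_univ_pi hT fun i => (hfin i).ae_eq_zero_compl).symm
  rw [integrable_indicator_iff (MeasurableSet.univ_pi hT), IntegrableOn, Measure.restrict_pi_pi' hT]
  exact Integrable.fintype_prod_dep fun i => (hf i).restrict

theorem integral_fintype_prod_eq_prod' {𝕜 : Type*} [RCLike 𝕜] {f : ∀ i, α i → 𝕜}
    (hf : ∀ i, Integrable (f i) (μ i)) :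
    ∫ x, ∏ i, f i (x i) ∂Measure.pi μ = ∏ i, ∫ x, f i x ∂μ i := by
  have hfin i := (hf i).aefinStronglyMeasurable
  have := fun i => (hfin i).sigmaFinite_restrict
  have hT i := (hfin i).measurableSet
  rw [integral_congr_ae (prod_ae_eq_indicator_univ_pi hT fun i => (hfin i).ae_eq_zero_compl),
    integral_indicator (MeasurableSet.univ_pi hT), Measure.restrict_pi_pi' hT,
    integral_fintype_prod_eq_prod]
  refine Finset.prod_congr rfl fun i _ => setIntegral_eq_integral_of_ae_compl_eq_zero ?_
  exact (ae_restrict_iff' (hT i).compl).1 (hfin i).ae_eq_zero_compl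

end MeasureTheory

namespace Matrix

variable {ι R : Type*} [Fintype ι] [DecidableEq ι] [CommRing R]

theorem det_mul_det_eq_sum_sum_sign_smul_prod {α : Type*} (φ ψ : ι → α → R) (x : ι → α) :
    (of fun j k => φ j (x k)).det * (of fun j k => ψ k (x j)).det =
      ∑ σ : Perm ι, ∑ τ : Perm ι,
        (Perm.sign σ * Perm.sign τ) • ∏ i, φ (σ i) (x i) * ψ (τ i) (x i) := by
  rw [← det_transpose (of fun j k => ψ k (x j)), det_apply, det_apply, Finset.sum_mul_sum]
  refine Finset.sum_congr rfl fun σ _ => Finset.sum_congr rfl fun τ _ => ?_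
  simp only [of_apply, transpose_apply, Finset.prod_mul_distrib, smul_mul_smul_comm, mul_smul]

theorem sum_sum_sign_smul_prod_eq_factorial_smul_det (M : Matrix ι ι R) :
    ∑ σ : Perm ι, ∑ τ : Perm ι, (Perm.sign σ * Perm.sign τ) • ∏ i, M (σ i) (τ i) =
      (Fintype.card ι).factorial • M.det := by
  have row_sum σ : ∑ τ : Perm ι, (Perm.sign σ * Perm.sign τ) • ∏ i, M (σ i) (τ i) = M.det := by
    calc _ = Perm.sign σ • ∑ τ : Perm ι, Perm.sign τ • ∏ i, (M.submatrix σ id)ᵀ (τ i) i := by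
          simp only [mul_smul, Finset.smul_sum, transpose_apply, submatrix_apply, id]
      _ = Perm.sign σ • (M.submatrix σ id).det := by rw [← det_apply, det_transpose]
      _ = M.det := by
          rw [det_permute, ← zsmul_eq_mul, ← Units.smul_def, smul_smul, Int.units_mul_self,
            one_smul]
  rw [Finset.sum_congr rfl fun σ _ => row_sum σ, Finset.sum_const, Finset.card_univ,
    Fintype.card_perm]

end Matrix

theorem andreief_identity_general (n : ℕ) (μ : Measure ℝ)
    (φ ψ : Fin n → ℝ → ℝ)
    (hφψ : ∀ j k, Integrable (fun x => φ j x * ψ k x) μ) :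
    ∫ x : Fin n → ℝ,
        (Matrix.det (Matrix.of fun j k => φ j (x k))) *
        (Matrix.det (Matrix.of fun j k => ψ k (x j)))
        ∂(Measure.pi fun _ => μ)
      = (n.factorial : ℝ) *
        Matrix.det (Matrix.of fun j k => ∫ x, φ j x * ψ k x ∂μ) := by
  have hint (σ τ : Perm (Fin n)) : Integrable
      (fun x : Fin n → ℝ => ∏ i, φ (σ i) (x i) * ψ (τ i) (x i)) (Measure.pi fun _ => μ) :=
    Integrable.fintype_prod_dep' fun i => hφψ _ _
  calc _ = ∫ x : Fin n → ℝ, ∑ σ : Perm (Fin n), ∑ τ : Perm (Fin n),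
          (σ.sign * τ.sign) • ∏ i, φ (σ i) (x i) * ψ (τ i) (x i) ∂(Measure.pi fun _ => μ) := by
        simp_rw [Matrix.det_mul_det_eq_sum_sum_sign_smul_prod]
    _ = ∑ σ : Perm (Fin n), ∑ τ : Perm (Fin n),
          (σ.sign * τ.sign) • ∏ i, ∫ t, φ (σ i) t * ψ (τ i) t ∂μ := by
        simp only [Units.smul_def]
        rw [integral_finsetSum _ fun σ _ =>
          integrable_finsetSum _ fun τ _ => (hint σ τ).fun_smul _]
        refine Finset.sum_congr rfl fun σ _ => ?_
        rw [integral_finsetSum _ fun τ _ => (hint σ τ).fun_smul _]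
        refine Finset.sum_congr rfl fun τ _ => ?_
        rw [(hint σ τ).integral_smul, integral_fintype_prod_eq_prod' fun i => hφψ _ _]
    _ = _ := by
        simpa using Matrix.sum_sum_sign_smul_prod_eq_factorial_smul_det
          (Matrix.of fun j k => ∫ x, φ j x * ψ k x ∂μ)

theorem andreief_identity (n : ℕ) (μ : Measure ℝ)
    (φ ψ : Fin n → ℝ → ℝ)
    (hφ : ∀ j, Integrable (φ j) μ) (hψ : ∀ k, Integrable (ψ k) μ)
    (hφψ : ∀ j k, Integrable (fun x => φ j x * ψ k x) μ) :
    ∫ x : Fin n → ℝ,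
        (Matrix.det (Matrix.of fun j k => φ j (x k))) *
        (Matrix.det (Matrix.of fun j k => ψ k (x j)))
        ∂(Measure.pi fun _ => μ)
      = (n.factorial : ℝ) *
        Matrix.det (Matrix.of fun j k => ∫ x, φ j x * ψ k x ∂μ) :=
  andreief_identity_general n μ φ ψ hφψ
end

section
/- (Telescoping sum of Gamma ratios) For complex s, t avoiding poles, integers n ≥ 1 and l, one has (s-t-1) · Σ_{k=0}^{n-1} (l - 2n + 2k + 1) · [Γ(t-k)/Γ(s-k)]·[Γ(t+l-2n+k+1)/Γ(s+l-2n+k+1)] = [Γ(t-n+1)/Γ(s-n)]·[Γ(t+l-n+1)/Γ(s+l-n)] - [Γ(t+1)/Γ(s)]·[Γ(t+l-2n+1)/Γ(s+l-2n)]. -/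
open Complex Finset

/-- With `L = l - 2n`, the `k`-th summand of the theorem, times `s - t - 1`, is the forward
difference of this function at `x = k`, so the sum telescopes. -/
noncomputable def gammaRatioProduct (s t L x : ℂ) : ℂ :=
  Gamma (t - x + 1) / Gamma (s - x) * (Gamma (t + L + x + 1) / Gamma (s + L + x))

/-- After `Γ(z + 1) = z Γ(z)` is used to bring both terms to common Gamma factors, what is left
is the polynomial identity `(s-x-1)(t+L+x+1) - (t-x)(s+L+x) = (s-t-1)(L+2x+1)`. -/
lemma gammaRatioProduct_add_one_sub (s t L x : ℂ) (hs : ∀ m : ℕ, s - (x + 1) ≠ -m)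
    (hsL : ∀ m : ℕ, s + L + x ≠ -m) (ht : t - x ≠ 0) (htL : t + L + x + 1 ≠ 0) :
    gammaRatioProduct s t L (x + 1) - gammaRatioProduct s t L x =
      (s - t - 1) * ((L + 2 * x + 1) * (Gamma (t - x) / Gamma (s - x)) *
        (Gamma (t + L + x + 1) / Gamma (s + L + x + 1))) := by
  have hs0 : s - (x + 1) ≠ 0 := by simpa using hs 0
  have hsL0 : s + L + x ≠ 0 := by simpa using hsL 0
  have hΓs : Gamma (s - x) = (s - (x + 1)) * Gamma (s - (x + 1)) := by
    rw [← Gamma_add_one _ hs0]; congr 1; ring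
  have hΓs₁ : Gamma (s - (x + 1)) ≠ 0 := Gamma_ne_zero hs
  have hΓsL : Gamma (s + L + x) ≠ 0 := Gamma_ne_zero hsL
  unfold gammaRatioProduct
  rw [show t - (x + 1) + 1 = t - x by ring, show t + L + (x + 1) + 1 = t + L + x + 1 + 1 by ring,
    ← add_assoc (s + L), Gamma_add_one _ htL, Gamma_add_one _ hsL0, Gamma_add_one _ ht, hΓs]
  field_simp
  ring

theorem gamma_ratio_telescoping_sum_general (s t : ℂ) (n : ℕ) (l : ℤ)
    (h : ∀ (m : ℕ) (k : ℕ), k ≤ n →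
      s - k ≠ -m ∧ t - k ≠ -m ∧ t - k + 1 ≠ -m ∧ t + 1 ≠ -m ∧
      s + l - 2 * n + k ≠ -m ∧ t + l - 2 * n + k ≠ -m ∧
      s + l - 2 * n + k + 1 ≠ -m ∧ t + l - 2 * n + k + 1 ≠ -m) :
    (s - t - 1) *
        ∑ k ∈ Finset.range n,
          ((l : ℂ) - 2 * n + 2 * k + 1) *
            (Complex.Gamma (t - k) / Complex.Gamma (s - k)) *
            (Complex.Gamma (t + l - 2 * n + k + 1) /
              Complex.Gamma (s + l - 2 * n + k + 1))
      = Complex.Gamma (t - n + 1) / Complex.Gamma (s - n) *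
          (Complex.Gamma (t + l - n + 1) / Complex.Gamma (s + l - n)) -
        Complex.Gamma (t + 1) / Complex.Gamma s *
          (Complex.Gamma (t + l - 2 * n + 1) /
            Complex.Gamma (s + l - 2 * n)) := by
  have step (k : ℕ) (hk : k < n) :
      gammaRatioProduct s t (l - 2 * n) ↑(k + 1) - gammaRatioProduct s t (l - 2 * n) k =
        (s - t - 1) * (((l : ℂ) - 2 * n + 2 * k + 1) * (Gamma (t - k) / Gamma (s - k)) *
          (Gamma (t + l - 2 * n + k + 1) / Gamma (s + l - 2 * n + k + 1))) := by
    have := gammaRatioProduct_add_one_sub s t (l - 2 * n) k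
      (fun m => by simpa using (h m (k + 1) hk).1)
      (fun m => by rw [← add_sub_assoc]; exact (h m k hk.le).2.2.2.2.1)
      (by simpa using (h 0 k hk.le).2.1)
      (by rw [← add_sub_assoc]; simpa using (h 0 k hk.le).2.2.2.2.2.2.2)
    simpa only [Nat.cast_succ, ← add_sub_assoc] using this
  rw [mul_sum, ← sum_congr rfl fun k hk => step k (mem_range.mp hk),
    sum_range_sub (fun k : ℕ => gammaRatioProduct s t (l - 2 * n) k)]
  simp only [gammaRatioProduct, Nat.cast_zero, sub_zero, add_zero, ← add_sub_assoc]
  ring_nf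

theorem gamma_ratio_telescoping_sum (s t : ℂ) (n : ℕ) (hn : 1 ≤ n) (l : ℤ)
    (h : ∀ (m : ℕ) (k : ℕ), k ≤ n →
      s - k ≠ -m ∧ t - k ≠ -m ∧ t - k + 1 ≠ -m ∧ t + 1 ≠ -m ∧
      s + l - 2 * n + k ≠ -m ∧ t + l - 2 * n + k ≠ -m ∧
      s + l - 2 * n + k + 1 ≠ -m ∧ t + l - 2 * n + k + 1 ≠ -m) :
    (s - t - 1) *
        ∑ k ∈ Finset.range n,
          ((l : ℂ) - 2 * n + 2 * k + 1) *
            (Complex.Gamma (t - k) / Complex.Gamma (s - k)) *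
            (Complex.Gamma (t + l - 2 * n + k + 1) /
              Complex.Gamma (s + l - 2 * n + k + 1))
      = Complex.Gamma (t - n + 1) / Complex.Gamma (s - n) *
          (Complex.Gamma (t + l - n + 1) / Complex.Gamma (s + l - n)) -
        Complex.Gamma (t + 1) / Complex.Gamma s *
          (Complex.Gamma (t + l - 2 * n + 1) /
            Complex.Gamma (s + l - 2 * n)) :=
  gamma_ratio_telescoping_sum_general s t n l h
end

section
/- For θ > 0 and α > -1, the hard-edge kernel K^{(α,θ)}(x,y) = θ x^α ∫_0^1 J_{(α+1)/θ, 1/θ}(xu) · J_{α+1,θ}((yu)^θ) u^α du satisfies the transformation identity (1/θ) x^{1/θ - 1} K^{(α,θ)}(x^{1/θ}, y^{1/θ}) = (x/y)^{α'} K^{(α', 1/θ)}(y, x), where α' = (α+1)/θ - 1. -/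
open MeasureTheory Set

/-- Wright's generalization of the Bessel function. -/
noncomputable def wrightBessel (a b x : ℝ) : ℝ :=
  ∑' j : ℕ, (-1) ^ j * x ^ j / (j.factorial * Real.Gamma (a + j * b))

/-- Borodin's hard edge kernel `K^{(α,θ)}`. -/
noncomputable def borodinKernel (α θ x y : ℝ) : ℝ :=
  θ * x ^ α * ∫ u in Set.Ioo (0 : ℝ) 1,
    wrightBessel ((α + 1) / θ) (1 / θ) (x * u) *
      wrightBessel (α + 1) θ ((y * u) ^ θ) * u ^ α

/-!
The substitution `u = v ^ θ` on `(0, 1)` turns the integrand of `K^{(α', 1/θ)}(y, x)` into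
`θ` times the integrand of `K^{(α,θ)}(x^{1/θ}, y^{1/θ})`, because `(α' + 1) / (1/θ) = α + 1`
and `α' + 1 = (α + 1) / θ` make the two Wright functions trade places. What remains is the
comparison of the prefactors, both of which reduce to `x ^ α'`.
-/

lemma rpow_mem_Ioo_zero_one_iff {v θ : ℝ} (hv : 0 < v) (hθ : 0 < θ) :
    v ^ θ ∈ Ioo (0 : ℝ) 1 ↔ v ∈ Ioo (0 : ℝ) 1 := by
  simp [hv, Real.rpow_pos_of_pos hv, Real.rpow_lt_one_iff' hv.le hθ]

theorem setIntegral_Ioo_zero_one_comp_rpow {E : Type*} [NormedAddCommGroup E]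
    [NormedSpace ℝ E] (f : ℝ → E) {θ : ℝ} (hθ : 0 < θ) :
    ∫ v in Ioo (0 : ℝ) 1, (θ * v ^ (θ - 1)) • f (v ^ θ) = ∫ u in Ioo (0 : ℝ) 1, f u := by
  have h_indicator (g : ℝ → E) :
      ∫ u in Ioo (0 : ℝ) 1, g u = ∫ u in Ioi 0, (Ioo (0 : ℝ) 1).indicator g u := by
    rw [integral_indicator measurableSet_Ioo, Measure.restrict_restrict measurableSet_Ioo,
      inter_eq_self_of_subset_left Ioo_subset_Ioi_self]
  rw [h_indicator f, ← integral_comp_rpow_Ioi_of_pos hθ, h_indicator]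
  refine setIntegral_congr_fun measurableSet_Ioi fun v hv => ?_
  simp only [indicator_apply, rpow_mem_Ioo_zero_one_iff (mem_Ioi.1 hv) hθ, smul_ite, smul_zero]

noncomputable def hardEdgeIntegral (α θ x y : ℝ) : ℝ :=
  ∫ u in Ioo (0 : ℝ) 1,
    wrightBessel ((α + 1) / θ) (1 / θ) (x * u) * wrightBessel (α + 1) θ (y * u ^ θ) * u ^ α

lemma borodinKernel_eq_hardEdgeIntegral {α θ x y : ℝ} (hy : 0 ≤ y) :
    borodinKernel α θ x y = θ * x ^ α * hardEdgeIntegral α θ x (y ^ θ) := by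
  rw [borodinKernel, hardEdgeIntegral]
  congr 1
  refine setIntegral_congr_fun measurableSet_Ioo fun u hu => ?_
  rw [Real.mul_rpow hy hu.1.le]

lemma borodinKernel_dual_eq_hardEdgeIntegral {α θ x y : ℝ} (hθ : 0 < θ) (hx : 0 ≤ x) :
    borodinKernel ((α + 1) / θ - 1) (1 / θ) y x
      = y ^ ((α + 1) / θ - 1) * hardEdgeIntegral α θ (x ^ (1 / θ)) y := by
  have hα_shift : (α + 1) / θ - 1 + 1 = (α + 1) / θ := by ring
  have hα_dual : ((α + 1) / θ - 1 + 1) / (1 / θ) = α + 1 := by field_simp; ring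
  have h_subst : ∀ v ∈ Ioo (0 : ℝ) 1,
      (θ * v ^ (θ - 1)) • (wrightBessel (α + 1) θ (y * v ^ θ) *
          wrightBessel ((α + 1) / θ) (1 / θ) ((x * v ^ θ) ^ (1 / θ)) *
          (v ^ θ) ^ ((α + 1) / θ - 1))
        = θ * (wrightBessel ((α + 1) / θ) (1 / θ) (x ^ (1 / θ) * v) *
          wrightBessel (α + 1) θ (y * v ^ θ) * v ^ α) := by
    intro v hv
    have h_root : (x * v ^ θ) ^ (1 / θ) = x ^ (1 / θ) * v := by
      rw [Real.mul_rpow hx (Real.rpow_nonneg hv.1.le _), one_div,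
        Real.rpow_rpow_inv hv.1.le hθ.ne']
    have h_weight : v ^ (θ - 1) * (v ^ θ) ^ ((α + 1) / θ - 1) = v ^ α := by
      rw [← Real.rpow_mul hv.1.le, ← Real.rpow_add hv.1]
      congr 1
      field_simp
      ring
    rw [smul_eq_mul, h_root, ← h_weight]
    ring
  rw [borodinKernel, hα_dual, one_div_one_div, hα_shift,
    ← setIntegral_Ioo_zero_one_comp_rpow _ hθ, setIntegral_congr_fun measurableSet_Ioo h_subst,
    integral_const_mul, hardEdgeIntegral]
  field_simp

theorem borodinKernel_parameter_transformation_general (θ α : ℝ) (hθ : 0 < θ)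
    (x y : ℝ) (hx : 0 < x) (hy : 0 < y) :
    (1 / θ) * x ^ (1 / θ - 1) *
        borodinKernel α θ (x ^ (1 / θ)) (y ^ (1 / θ))
      = (x / y) ^ ((α + 1) / θ - 1) *
        borodinKernel ((α + 1) / θ - 1) (1 / θ) y x := by
  have hy_root : (y ^ (1 / θ)) ^ θ = y := by rw [one_div, Real.rpow_inv_rpow hy.le hθ.ne']
  have hx_factor : x ^ (1 / θ - 1) * (x ^ (1 / θ)) ^ α = x ^ ((α + 1) / θ - 1) := by
    rw [← Real.rpow_mul hx.le, ← Real.rpow_add hx]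
    congr 1
    field_simp
    ring
  have hxy_factor :
      (x / y) ^ ((α + 1) / θ - 1) * y ^ ((α + 1) / θ - 1) = x ^ ((α + 1) / θ - 1) := by
    rw [Real.div_rpow hx.le hy.le, div_mul_cancel₀ _ (Real.rpow_pos_of_pos hy _).ne']
  rw [borodinKernel_eq_hardEdgeIntegral (Real.rpow_nonneg hy.le _), hy_root,
    borodinKernel_dual_eq_hardEdgeIntegral hθ hx.le, ← mul_assoc ((x / y) ^ _), hxy_factor,
    ← hx_factor]
  field_simp

theorem borodinKernel_parameter_transformation (θ α : ℝ) (hθ : 0 < θ)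
    (hα : -1 < α) (x y : ℝ) (hx : 0 < x) (hy : 0 < y) :
    (1 / θ) * x ^ (1 / θ - 1) *
        borodinKernel α θ (x ^ (1 / θ)) (y ^ (1 / θ))
      = (x / y) ^ ((α + 1) / θ - 1) *
        borodinKernel ((α + 1) / θ - 1) (1 / θ) y x :=
  borodinKernel_parameter_transformation_general θ α hθ x y hx hy
end
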